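/- arXiv:2212.11840 — 2 statements merged into one kernel-verified Lean document; each statement's English description precedes it below -/
import Mathlib

section
/- For an arc I ⊂ ∂B₁(0) of length α = H¹(I) ≤ 2π/3 with endpoints a and b, let Y(I) = [0,ξ] ∪ [ξ,a] ∪ [ξ,b] denote the fork connecting the center 0 of the unit ball to the two endpoints of the arc, in which the branch point ξ is chosen such that the three segments form equal angles of 120° at ξ. Then H¹(Y(I)) = 2 sin(α/2 + π/6). -/
/-
At the branch point the three edges meet at angles `2π/3`, so for the edge lengths
`t = |ξ|`, `u = |a - ξ|`, `v = |b - ξ|` the law of cosines in the triangles `0ξa`, `0ξb`, `aξb`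
reads `t² + tu + u² = 1`, `t² + tv + v² = 1` and `u² + uv + v² = |a - b|² = 4 sin²(α/2)`.
Subtracting the first two gives `u = v`, hence `u = 2 sin(α/2)/√3` and then
`t = cos(α/2) - u/2` (the other roots are excluded since `t, u, v, cos(α/2) ≥ 0`), so that
`t + u + v = cos(α/2) + √3 sin(α/2) = 2 sin(α/2 + π/6)`. The three edges meet only at `ξ`,
so `H¹` of the fork is the sum of their lengths.
-/

open MeasureTheory Set Metric
open scoped ENNReal

noncomputable section

abbrev E2 : Type := EuclideanSpace ℝ (Fin 2)

open InnerProductGeometry Real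

theorem Real.cos_two_pi_div_three : cos (2 * π / 3) = -(1 / 2) := by
  rw [show 2 * π / 3 = π - π / 3 by ring, cos_pi_sub, cos_pi_div_three]

section InnerProductSpace

variable {V : Type*} [NormedAddCommGroup V] [InnerProductSpace ℝ V]

theorem InnerProductGeometry.norm_sub_sq_of_angle_eq_two_pi_div_three {x y : V}
    (h : angle x y = 2 * π / 3) : ‖x - y‖ ^ 2 = ‖x‖ ^ 2 + ‖x‖ * ‖y‖ + ‖y‖ ^ 2 := by
  have := norm_sub_sq_eq_norm_sq_add_norm_sq_sub_two_mul_norm_mul_norm_mul_cos_angle x y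
  rw [h, cos_two_pi_div_three] at this
  linear_combination this

theorem InnerProductGeometry.norm_sub_sq_eq_four_mul_sin_sq_half_angle {a b : V}
    (ha : ‖a‖ = 1) (hb : ‖b‖ = 1) : ‖a - b‖ ^ 2 = 4 * sin (angle a b / 2) ^ 2 := by
  have := norm_sub_sq_eq_norm_sq_add_norm_sq_sub_two_mul_norm_mul_norm_mul_cos_angle a b
  rw [ha, hb, ← mul_div_cancel₀ (angle a b) two_ne_zero, cos_two_mul_eq_one_sub] at this
  linear_combination this

theorem InnerProductGeometry.segment_inter_segment_subset_of_angle_ne_zero {ξ p q : V}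
    (h : angle (p - ξ) (q - ξ) ≠ 0) : segment ℝ ξ p ∩ segment ℝ ξ q ⊆ {ξ} := by
  rintro z ⟨hzp, hzq⟩
  rw [segment_eq_image'] at hzp hzq
  obtain ⟨s, ⟨hs, -⟩, rfl⟩ := hzp
  obtain ⟨r, ⟨hr, -⟩, hrs⟩ := hzq
  have hrs : r • (q - ξ) = s • (p - ξ) := add_left_cancel hrs
  by_contra hne
  have hsp : s • (p - ξ) ≠ 0 := by simpa using hne
  have hrq : r • (q - ξ) ≠ 0 := hrs ▸ hsp
  have hr : 0 < r := hr.lt_of_ne' (left_ne_zero_of_smul hrq)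
  refine h (angle_eq_zero_iff.2 ⟨right_ne_zero_of_smul hsp, s / r,
    div_pos (hs.lt_of_ne' (left_ne_zero_of_smul hsp)) hr, ?_⟩)
  rw [div_eq_inv_mul, mul_smul, ← hrs, inv_smul_smul₀ hr.ne']

end InnerProductSpace

theorem hausdorffMeasure_segment_union_segment_union_segment {E : Type*}
    [NormedAddCommGroup E] [NormedSpace ℝ E] [MeasurableSpace E] [BorelSpace E] {ξ p q r : E}
    (hpq : segment ℝ ξ p ∩ segment ℝ ξ q ⊆ {ξ}) (hpr : segment ℝ ξ p ∩ segment ℝ ξ r ⊆ {ξ})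
    (hqr : segment ℝ ξ q ∩ segment ℝ ξ r ⊆ {ξ}) :
    μH[1] (segment ℝ ξ p ∪ segment ℝ ξ q ∪ segment ℝ ξ r)
      = ENNReal.ofReal (‖p - ξ‖ + ‖q - ξ‖ + ‖r - ξ‖) := by
  have := Measure.nullSingletonClass_hausdorff E one_pos
  have hξ : μH[1] ({ξ} : Set E) = 0 := measure_singleton ξ
  have hmeas (x : E) : MeasurableSet (segment ℝ ξ x) :=
    convexHull_pair (𝕜 := ℝ) ξ x ▸ ((toFinite {ξ, x}).isClosed_convexHull ℝ).measurableSet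
  rw [measure_union₀ (hmeas r).nullMeasurableSet
      (measure_mono_null (union_inter_distrib_right .. ▸ union_subset hpr hqr) hξ),
    measure_union₀ (hmeas q).nullMeasurableSet (measure_mono_null hpq hξ)]
  simp only [hausdorffMeasure_segment, edist_dist, dist_eq_norm']
  rw [ENNReal.ofReal_add (by positivity) (by positivity),
    ENNReal.ofReal_add (by positivity) (by positivity)]

theorem fork_lengths_sum_eq {t u v c s : ℝ} (ht : 0 ≤ t) (hu : 0 ≤ u) (hv : 0 ≤ v) (hc : 0 ≤ c)
    (hs : 0 ≤ s) (hcs : c ^ 2 + s ^ 2 = 1) (htu : t ^ 2 + t * u + u ^ 2 = 1)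
    (htv : t ^ 2 + t * v + v ^ 2 = 1) (huv : u ^ 2 + u * v + v ^ 2 = 4 * s ^ 2) :
    t + u + v = c + √3 * s := by
  have huv_eq : u = v := by
    have hpos : 0 < t + u + v := by
      by_contra! h
      nlinarith
    have : (u - v) * (t + u + v) = 0 := by linear_combination htu - htv
    linarith [(mul_eq_zero.1 this).resolve_right hpos.ne']
  subst huv_eq
  have h3 : √3 ^ 2 = 3 := Real.sq_sqrt (by norm_num)
  have hs_eq : 2 * s = √3 * u := by
    refine (sq_eq_sq₀ (by positivity) (by positivity)).1 ?_
    linear_combination -huv - u ^ 2 * h3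
  have ht_eq : t = c - u / 2 := by
    have hpos : 0 < t + c + u / 2 := by
      by_contra! h
      nlinarith
    have : (t - (c - u / 2)) * (t + c + u / 2) = 0 := by
      linear_combination htu - hcs - (1 / 4) * huv
    linarith [(mul_eq_zero.1 this).resolve_right hpos.ne']
  linear_combination ht_eq - (√3 / 2) * hs_eq - (u / 2) * h3

theorem steiner_fork_length_general
    (a b ξ : E2) (ha : ‖a‖ = 1) (hb : ‖b‖ = 1)
    (α : ℝ) (hα : α = InnerProductGeometry.angle a b)
    (h1 : InnerProductGeometry.angle ((0:E2) - ξ) (a - ξ) = 2 * Real.pi / 3)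
    (h2 : InnerProductGeometry.angle (a - ξ) (b - ξ) = 2 * Real.pi / 3)
    (h3 : InnerProductGeometry.angle (b - ξ) ((0:E2) - ξ) = 2 * Real.pi / 3) :
    μH[1] (segment ℝ (0:E2) ξ ∪ segment ℝ ξ a ∪ segment ℝ ξ b)
      = ENNReal.ofReal (2 * Real.sin (α / 2 + Real.pi / 6)) := by
  have hθ0 := angle_nonneg a b
  have hθπ := angle_le_pi a b
  have hfork : ‖(0 : E2) - ξ‖ + ‖a - ξ‖ + ‖b - ξ‖
      = cos (α / 2) + √3 * sin (α / 2) := by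
    refine fork_lengths_sum_eq (norm_nonneg _) (norm_nonneg _) (norm_nonneg _)
      (cos_nonneg_of_mem_Icc ⟨by linarith, by linarith⟩)
      (sin_nonneg_of_nonneg_of_le_pi (by linarith) (by linarith)) (cos_sq_add_sin_sq _) ?_ ?_ ?_
    · have := norm_sub_sq_of_angle_eq_two_pi_div_three h1
      rw [sub_sub_sub_cancel_right, zero_sub, norm_neg, ha] at this
      linarith
    · have := norm_sub_sq_of_angle_eq_two_pi_div_three h3
      rw [sub_sub_sub_cancel_right, sub_zero, hb] at this
      linarith
    · have := norm_sub_sq_of_angle_eq_two_pi_div_three h2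
      rw [sub_sub_sub_cancel_right, norm_sub_sq_eq_four_mul_sin_sq_half_angle ha hb, ← hα] at this
      linarith
  have h120 : 2 * π / 3 ≠ 0 := by positivity
  rw [segment_symm, hausdorffMeasure_segment_union_segment_union_segment
    (segment_inter_segment_subset_of_angle_ne_zero (h1.trans_ne h120))
    (segment_inter_segment_subset_of_angle_ne_zero ((angle_comm _ _).trans h3 |>.trans_ne h120))
    (segment_inter_segment_subset_of_angle_ne_zero (h2.trans_ne h120)), hfork,
    sin_add, cos_pi_div_six, sin_pi_div_six]
  congr 1
  ring

/-- **Lemma A.4 (Length of a Steiner fork).** Let `a, b` be the endpoints of an arc of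
length `α ≤ 2π/3` on the unit circle, and let `Y = [0,ξ] ∪ [ξ,a] ∪ [ξ,b]` be the fork
connecting the center `0` to `a` and `b` whose branch point `ξ` forms three equal
angles of `120°`. Then `H¹(Y) = 2 sin(α/2 + π/6)`. -/
theorem steiner_fork_length
    (a b ξ : E2) (ha : ‖a‖ = 1) (hb : ‖b‖ = 1) (hab : a ≠ b)
    (α : ℝ) (hα : α = InnerProductGeometry.angle a b)
    (hα0 : 0 < α) (hα1 : α ≤ 2 * Real.pi / 3)
    (h1 : InnerProductGeometry.angle ((0:E2) - ξ) (a - ξ) = 2 * Real.pi / 3)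
    (h2 : InnerProductGeometry.angle (a - ξ) (b - ξ) = 2 * Real.pi / 3)
    (h3 : InnerProductGeometry.angle (b - ξ) ((0:E2) - ξ) = 2 * Real.pi / 3) :
    μH[1] (segment ℝ (0:E2) ξ ∪ segment ℝ ξ a ∪ segment ℝ ξ b)
      = ENNReal.ofReal (2 * Real.sin (α / 2 + Real.pi / 6)) :=
  steiner_fork_length_general a b ξ ha hb α hα h1 h2 h3

end
end

section
/- Let P ≥ 2 and let σ ∈ ℝ^{P×P} be symmetric with σ_{ii} = 0, σ_{ij} > 0 for i ≠ j, satisfying the strict triangle inequality σ_{ij} < σ_{ik} + σ_{kj} for all pairwise distinct i,j,k. Fix distinct indices k,l ∈ {1,…,P} and a unit vector n ∈ ℝ² (interpreted as the normal n̄_{kl} of the interface between phases k and l, with n̄_{lk} = −n̄_{kl}), and define ξ_i := (σ_{ik}/2)(−n) + (σ_{il}/2)n for each i ∈ {1,…,P}. Then ξ_k − ξ_l = σ_{kl} n, and for all distinct i,j ∈ {1,…,P} with at least one of i,j not in {k,l}, it holds |ξ_i − ξ_j| < σ_{ij}. -/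
noncomputable section

/-- **Two-phase calibration vectors.** Let `σ` be symmetric, vanishing on the diagonal,
positive off the diagonal, and satisfying the strict triangle inequality. For distinct
phases `k, l`, a unit normal `n = n̄_{kl}` (so `n̄_{lk} = -n`), and the auxiliary
vectors `ξ_i := (σ_{ik}/2)(-n) + (σ_{il}/2) n`, one has `ξ_k - ξ_l = σ_{kl} n` and
`|ξ_i - ξ_j| < σ_{ij}` whenever `i ≠ j` and at least one of `i, j` is not in `{k, l}`. -/
theorem two_phase_calibration_vectors
    {P : ℕ} (hP : 2 ≤ P) (σ : Fin P → Fin P → ℝ)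
    (hsym : ∀ i j, σ i j = σ j i) (hdiag : ∀ i, σ i i = 0)
    (hpos : ∀ i j, i ≠ j → 0 < σ i j)
    (htri : ∀ i j k : Fin P, i ≠ j → j ≠ k → i ≠ k → σ i j < σ i k + σ k j)
    (k l : Fin P) (hkl : k ≠ l) (n : E2) (hn : ‖n‖ = 1) :
    (((σ k k / 2) • (-n) + (σ k l / 2) • n)
        - ((σ l k / 2) • (-n) + (σ l l / 2) • n) = σ k l • n) ∧
    ∀ i j : Fin P, i ≠ j →
      (i ∉ ({k, l} : Set (Fin P)) ∨ j ∉ ({k, l} : Set (Fin P))) →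
      ‖((σ i k / 2) • (-n) + (σ i l / 2) • n)
          - ((σ j k / 2) • (-n) + (σ j l / 2) • n)‖ < σ i j := by
  -- helper: strict/lax one-sided bounds
  have step : ∀ i j m : Fin P, i ≠ j → j ≠ m → σ i m - σ j m < σ i j := by
    intro i j m hij hjm
    by_cases him : i = m
    · subst him
      have h2 := hpos i j hij
      have h3 := hsym j i
      have h4 := hdiag i
      linarith
    · have ht := htri i m j him (fun h => hjm h.symm) hij
      linarith [hsym j m]
  have stepeq : ∀ i j : Fin P, σ i j - σ j j = σ i j := by
    intro i j; rw [hdiag]; ring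
  constructor
  · rw [hdiag k, hdiag l, hsym l k]
    have : ((0:ℝ) / 2) • (-n) + (σ k l / 2) • n
        - ((σ k l / 2) • (-n) + ((0:ℝ) / 2) • n) = σ k l • n := by
      rw [smul_neg, smul_neg]
      rw [show (σ k l : ℝ) = σ k l / 2 + σ k l / 2 by ring, add_smul]
      module
    simpa using this
  · intro i j hij hmem
    have key : ((σ i k / 2) • (-n) + (σ i l / 2) • n)
          - ((σ j k / 2) • (-n) + (σ j l / 2) • n)
        = ((σ i l - σ i k - σ j l + σ j k) / 2) • n := by
      module
    rw [key, norm_smul, hn, mul_one, Real.norm_eq_abs, abs_lt]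
    have hnot1 : ¬(i = k ∧ j = l) := by
      rintro ⟨rfl, rfl⟩
      rcases hmem with h | h <;> simp at h
    have hnot2 : ¬(i = l ∧ j = k) := by
      rintro ⟨rfl, rfl⟩
      rcases hmem with h | h <;> simp at h
    have hji : j ≠ i := fun h => hij h.symm
    constructor
    · -- σ i k - σ j k + σ j l - σ i l < 2 σ i j
      rw [neg_lt, show -((σ i l - σ i k - σ j l + σ j k) / 2)
          = (σ i k - σ j k + (σ j l - σ i l)) / 2 by ring]
      by_cases hjk : j = k
      · subst hjk
        have h1 := stepeq i j
        have h2 : σ j l - σ i l < σ j i := by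
          apply step j i l hji
          intro h; exact hnot2 ⟨h, rfl⟩
        rw [hsym j i] at h2
        linarith
      · have h1 := step i j k hij hjk
        by_cases hil : i = l
        · subst hil
          linarith [hdiag i, hsym j i]
        · have h2 := step j i l hji hil
          rw [hsym j i] at h2
          linarith
    · -- σ i l - σ j l + σ j k - σ i k < 2 σ i j
      rw [show (σ i l - σ i k - σ j l + σ j k) / 2
          = (σ i l - σ j l + (σ j k - σ i k)) / 2 by ring]
      by_cases hjl : j = l
      · subst hjl
        have h1 := stepeq i j
        have h2 : σ j k - σ i k < σ j i := by
          apply step j i k hji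
          intro h; exact hnot1 ⟨h, rfl⟩
        rw [hsym j i] at h2
        linarith
      · have h1 := step i j l hij hjl
        by_cases hik : i = k
        · subst hik
          linarith [hdiag i, hsym j i]
        · have h2 := step j i k hji hik
          rw [hsym j i] at h2
          linarith

end
end
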